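/- arXiv:2208.06459 — 5 statements merged into one kernel-verified Lean document; each statement's English description precedes it below -/
import Mathlib

section
/- For every complex numbers a, b, z with b not a nonpositive integer, the Kummer confluent hypergeometric function satisfies Φ(a, b, z) = e^z · Φ(b − a, b, −z). -/
/-!
Multiplying the series of `Φ(b - a, b, -z)` by that of `exp z` is a Cauchy product of exponential
generating functions, whose `n`-th coefficient is `∑ₖ C(n, k) (-1)ᵏ (b - a)ₖ / (b)ₖ`. Since
`(b)ₙ = (b)ₖ (b + k)ₙ₋ₖ`, this is `(a)ₙ / (b)ₙ` by the Chu–Vandermonde identity for falling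
factorials, applied to the splitting `a + n - 1 = (a - b) + (b + n - 1)`.
-/

open Complex

/-- The Kummer confluent hypergeometric function `Φ(a, b, z)`. -/
noncomputable def kummerPhi (a b z : ℂ) : ℂ :=
  ∑' k : ℕ, ((ascPochhammer ℂ k).eval a / (ascPochhammer ℂ k).eval b) * z ^ k /
    (Nat.factorial k)

open Polynomial Finset Filter Topology
open scoped Nat

namespace Polynomial

variable {R : Type*}

theorem ascPochhammer_eval_ne_zero [CommRing R] [IsDomain R] {b : R}
    (hb : ∀ n : ℕ, b ≠ -(n : R)) (k : ℕ) : (ascPochhammer R k).eval b ≠ 0 := by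
  rw [ne_eq, ascPochhammer_eval_eq_zero_iff]
  rintro ⟨n, -, hn⟩
  exact hb n (by rw [hn, neg_neg])

theorem ascPochhammer_eval_add_mul [CommSemiring R] (b : R) (i j : ℕ) :
    (ascPochhammer R (i + j)).eval b =
      (ascPochhammer R i).eval b * (ascPochhammer R j).eval (b + i) := by
  simp [← ascPochhammer_mul]

theorem descPochhammer_eval_eq_neg_one_pow_mul [CommRing R] (r : R) (k : ℕ) :
    (descPochhammer R k).eval r = (-1) ^ k * (ascPochhammer R k).eval (-r) := by
  rw [ascPochhammer_eval_neg_eq_descPochhammer, ← mul_assoc, ← mul_pow, neg_one_mul, neg_neg,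
    one_pow, one_mul]

theorem descPochhammer_eval_add [CommRing R] (r s : R) (n : ℕ) :
    (descPochhammer R n).eval (r + s) = ∑ ij ∈ antidiagonal n,
      n.choose ij.1 * ((descPochhammer R ij.1).eval r * (descPochhammer R ij.2).eval s) := by
  have smeval_eq_eval (m : ℕ) (x : R) :
      (descPochhammer ℤ m).smeval x = (descPochhammer R m).eval x := by
    rw [descPochhammer_smeval_eq_ascPochhammer, ascPochhammer_smeval_eq_eval,
      ← descPochhammer_eval_eq_ascPochhammer]
  simpa only [smeval_eq_eval] using Ring.descPochhammer_smeval_add n (Commute.all r s)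

theorem ascPochhammer_eval_eq_sum_antidiagonal [CommRing R] (a b : R) (n : ℕ) :
    (ascPochhammer R n).eval a = ∑ ij ∈ antidiagonal n, n.choose ij.1 *
      ((-1) ^ ij.1 * (ascPochhammer R ij.1).eval (b - a) *
        (ascPochhammer R ij.2).eval (b + ij.1)) := by
  have h := descPochhammer_eval_add (a - b) (b + n - 1) n
  rw [show a - b + (b + n - 1) = a + n - 1 by ring, descPochhammer_eval_eq_ascPochhammer,
    show a + n - 1 - n + 1 = a by ring] at h
  rw [h]
  refine sum_congr rfl fun ij hij => ?_
  obtain ⟨i, j⟩ := ij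
  have harg : b + ((i + j : ℕ) : R) - 1 - j + 1 = b + i := by push_cast; ring
  rw [← mem_antidiagonal.mp hij, descPochhammer_eval_eq_neg_one_pow_mul,
    descPochhammer_eval_eq_ascPochhammer, neg_sub, harg, mul_assoc]

theorem ascPochhammer_eval_div_eq_sum_antidiagonal {K : Type*} [Field K] (a : K) {b : K}
    (hb : ∀ n : ℕ, b ≠ -(n : K)) (n : ℕ) :
    (ascPochhammer K n).eval a / (ascPochhammer K n).eval b = ∑ ij ∈ antidiagonal n,
      n.choose ij.1 * ((-1) ^ ij.1 * (ascPochhammer K ij.1).eval (b - a) /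
        (ascPochhammer K ij.1).eval b) := by
  rw [ascPochhammer_eval_eq_sum_antidiagonal a b, sum_div]
  refine sum_congr rfl fun ij hij => ?_
  obtain ⟨i, j⟩ := ij
  have hshift : (ascPochhammer K j).eval (b + i) ≠ 0 :=
    ascPochhammer_eval_ne_zero (fun m h => hb (i + m) (by push_cast; linear_combination h)) j
  have hpoch := ascPochhammer_eval_ne_zero hb i
  rw [← mem_antidiagonal.mp hij, ascPochhammer_eval_add_mul b i j]
  field_simp

end Polynomial

theorem summable_norm_of_succ_eq_mul_of_tendsto_zero {R : Type*} [SeminormedRing R]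
    {f g : ℕ → R} (hfg : ∀ k, f (k + 1) = f k * g k) (hg : Tendsto g atTop (𝓝 0)) :
    Summable fun k => ‖f k‖ := by
  refine summable_of_ratio_norm_eventually_le (r := 1 / 2) (by norm_num) ?_
  filter_upwards [(tendsto_zero_iff_norm_tendsto_zero.mp hg).eventually_le_const
    (by norm_num : (0 : ℝ) < 1 / 2)] with k hk
  rw [norm_norm, norm_norm, hfg]
  calc ‖f k * g k‖ ≤ ‖f k‖ * ‖g k‖ := norm_mul_le _ _
    _ ≤ ‖f k‖ * (1 / 2) := by gcongr
    _ = 1 / 2 * ‖f k‖ := mul_comm _ _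

theorem summable_norm_kummerPhi_term (a : ℂ) {b : ℂ} (hb : ∀ n : ℕ, b ≠ -(n : ℂ)) (z : ℂ) :
    Summable fun k : ℕ =>
      ‖(ascPochhammer ℂ k).eval a / (ascPochhammer ℂ k).eval b * z ^ k / (k ! : ℂ)‖ := by
  refine summable_norm_of_succ_eq_mul_of_tendsto_zero
    (g := fun k => (a + k) / (b + k) * (z / (k + 1))) (fun k => ?_) ?_
  · have hbk : b + k ≠ 0 := fun h => hb k (eq_neg_of_add_eq_zero_left h)
    have hpoch := ascPochhammer_eval_ne_zero hb k
    simp only [ascPochhammer_succ_eval, Nat.factorial_succ, pow_succ]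
    push_cast
    field_simp
  · have hratio : Tendsto (fun k : ℕ => (a + k) / (b + k)) atTop (𝓝 1) := by
      simpa using tendsto_add_mul_div_add_mul_atTop_nhds a b (1 : ℂ) one_ne_zero
    have hz : Tendsto (fun k : ℕ => z / (k + 1)) atTop (𝓝 0) := by
      simpa [div_eq_mul_one_div z] using
        (tendsto_one_div_add_atTop_nhds_zero_nat (𝕜 := ℂ)).const_mul z
    simpa using hratio.mul hz

theorem tsum_mul_exp_eq_tsum_sum_antidiagonal (c : ℕ → ℂ) (z : ℂ)
    (hc : Summable fun k => ‖c k * z ^ k / (k ! : ℂ)‖) :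
    (∑' k, c k * z ^ k / (k ! : ℂ)) * exp z =
      ∑' n, (∑ ij ∈ antidiagonal n, n.choose ij.1 * c ij.1) * z ^ n / (n ! : ℂ) := by
  have hexp : Summable fun k => ‖z ^ k / (k ! : ℂ)‖ := by
    simpa [norm_div, norm_pow] using Real.summable_pow_div_factorial ‖z‖
  rw [exp_eq_exp_ℂ, NormedSpace.exp_eq_tsum_div,
    tsum_mul_tsum_eq_tsum_sum_antidiagonal_of_summable_norm hc hexp]
  refine tsum_congr fun n => ?_
  rw [sum_mul, sum_div]
  refine sum_congr rfl fun ij hij => ?_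
  obtain ⟨i, j⟩ := ij
  have hfact : ((i + j) ! : ℂ) = (i + j).choose i * i ! * j ! := by
    rw [Nat.choose_symm_add]
    exact_mod_cast (Nat.add_choose_mul_factorial_mul_factorial i j).symm
  rw [← mem_antidiagonal.mp hij, hfact, pow_add]
  have hi := Nat.factorial_ne_zero i
  have hj := Nat.factorial_ne_zero j
  have hchoose := (Nat.choose_pos (Nat.le_add_right i j)).ne'
  field_simp

theorem kummer_relation (a b z : ℂ) (hb : ∀ n : ℕ, b ≠ -(n : ℂ)) :
    kummerPhi a b z = Complex.exp z * kummerPhi (b - a) b (-z) := by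
  set c : ℕ → ℂ := fun k =>
    (-1) ^ k * (ascPochhammer ℂ k).eval (b - a) / (ascPochhammer ℂ k).eval b
  have hterm (k : ℕ) : (ascPochhammer ℂ k).eval (b - a) / (ascPochhammer ℂ k).eval b *
      (-z) ^ k / (k ! : ℂ) = c k * z ^ k / (k ! : ℂ) := by
    rw [neg_pow]
    ring
  have hc : Summable fun k => ‖c k * z ^ k / (k ! : ℂ)‖ := by
    simpa only [hterm] using summable_norm_kummerPhi_term (b - a) hb (-z)
  rw [mul_comm, kummerPhi, kummerPhi, tsum_congr hterm,
    tsum_mul_exp_eq_tsum_sum_antidiagonal c z hc]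
  simp only [ascPochhammer_eval_div_eq_sum_antidiagonal a hb, c]
end

section
/- If a, b, z are complex numbers with Re(b) > Re(a) > 0, then Φ(a, b, z) = (Γ(b) / (Γ(a) Γ(b − a))) · ∫_0^1 e^{z t} t^{a−1} (1 − t)^{b−a−1} dt. -/
/-!
Expand `exp (z t)` in its power series and integrate term by term against the Beta density
`t^(a-1) (1-t)^(b-a-1)`; dominated convergence applies since `‖z t‖ ≤ ‖z‖` on `[0, 1]`. The
`k`-th term is `z^k / k! · B(a+k, b-a) = z^k / k! · Γ(a+k) Γ(b-a) / Γ(b+k)`, and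
`Γ(a+k) / Γ(a) = (a)_k` turns the normalised series into Kummer's.
-/

open Complex

open MeasureTheory Set
open scoped Nat

theorem hasSum_integral_pow_div_factorial_mul {α : Type*} [MeasurableSpace α] {μ : Measure α}
    {f w : α → ℂ} {R : ℝ} (hf : AEStronglyMeasurable f μ) (hfR : ∀ᵐ t ∂μ, ‖f t‖ ≤ R)
    (hw : Integrable w μ) :
    HasSum (fun k : ℕ => ∫ t, f t ^ k / k ! * w t ∂μ) (∫ t, exp (f t) * w t ∂μ) := by
  refine hasSum_integral_of_dominated_convergence (fun k t => R ^ k / k ! * ‖w t‖)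
    (fun k => by have := hw.1; fun_prop) (fun k => ?_)
    (ae_of_all _ fun t => (Real.summable_pow_div_factorial R).mul_right _) ?_
    (ae_of_all _ fun t => ?_)
  · filter_upwards [hfR] with t ht
    rw [norm_mul, norm_div, norm_pow, Complex.norm_natCast]
    gcongr
  · simp_rw [tsum_mul_right]
    exact hw.norm.const_mul _
  · rw [exp_eq_exp_ℂ]
    exact (NormedSpace.expSeries_div_hasSum_exp (f t)).mul_right (w t)

namespace Complex

theorem ne_neg_natCast_of_re_pos {s : ℂ} (hs : 0 < s.re) (m : ℕ) : s ≠ -m := by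
  rintro rfl
  simp only [neg_re, natCast_re, Left.neg_pos_iff] at hs
  exact (Nat.cast_nonneg m).not_gt hs

theorem Gamma_div_mul_betaIntegral_add_nat {a b : ℂ} (ha : 0 < a.re) (hab : 0 < (b - a).re)
    (k : ℕ) :
    Gamma b / (Gamma a * Gamma (b - a)) * betaIntegral (a + k) (b - a) =
      (ascPochhammer ℂ k).eval a / (ascPochhammer ℂ k).eval b := by
  have hb : 0 < b.re := by simpa using add_pos ha hab
  have hak : 0 < (a + k).re := by
    simp only [add_re, natCast_re]
    positivity
  rw [betaIntegral_eq_Gamma_mul_div _ _ hak hab, show a + k + (b - a) = b + k by ring,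
    ← Gamma_add_nat_div_Gamma_eq a (ne_neg_natCast_of_re_pos ha),
    ← Gamma_add_nat_div_Gamma_eq b (ne_neg_natCast_of_re_pos hb)]
  have := Gamma_ne_zero_of_re_pos ha
  have := Gamma_ne_zero_of_re_pos hb
  have := Gamma_ne_zero_of_re_pos hab
  field_simp

theorem hasSum_betaIntegral_add_nat {a c : ℂ} (ha : 0 < a.re) (hc : 0 < c.re) (z : ℂ) :
    HasSum (fun k : ℕ => z ^ k / k ! * betaIntegral (a + k) c)
      (∫ t in (0 : ℝ)..1, exp (z * t) * ((t : ℂ) ^ (a - 1) * (1 - (t : ℂ)) ^ (c - 1))) := by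
  have hw := (intervalIntegrable_iff_integrableOn_Ioc_of_le zero_le_one).1
    (betaIntegral_convergent ha hc)
  have hz : ∀ᵐ t : ℝ ∂volume.restrict (Ioc 0 1), ‖z * t‖ ≤ ‖z‖ := by
    refine (ae_restrict_mem measurableSet_Ioc).mono fun t ht => ?_
    rw [norm_mul, norm_real, Real.norm_of_nonneg ht.1.le]
    exact mul_le_of_le_one_right (norm_nonneg z) ht.2
  convert hasSum_integral_pow_div_factorial_mul
    (by fun_prop : Continuous fun t : ℝ => z * t).aestronglyMeasurable hz hw using 1
  · ext k
    rw [betaIntegral, intervalIntegral.integral_of_le zero_le_one, ← integral_const_mul]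
    refine setIntegral_congr_fun measurableSet_Ioc fun t ht => ?_
    have ht0 : (t : ℂ) ≠ 0 := ofReal_ne_zero.2 ht.1.ne'
    rw [add_sub_right_comm, cpow_add _ _ ht0, cpow_natCast]
    ring
  · rw [intervalIntegral.integral_of_le zero_le_one]

end Complex

theorem kummer_integral_repr (a b z : ℂ) (ha : 0 < a.re) (hab : a.re < b.re) :
    kummerPhi a b z =
      Complex.Gamma b / (Complex.Gamma a * Complex.Gamma (b - a)) *
        ∫ t in (0:ℝ)..1,
          Complex.exp (z * t) * (t : ℂ) ^ (a - 1) * ((1 - t : ℝ) : ℂ) ^ (b - a - 1) := by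
  have hc : 0 < (b - a).re := by simpa using hab
  have hsum := (hasSum_betaIntegral_add_nat ha hc z).mul_left
    (Gamma b / (Gamma a * Gamma (b - a)))
  simp only [ofReal_sub, ofReal_one, mul_assoc]
  rw [← hsum.tsum_eq, kummerPhi]
  refine tsum_congr fun k => ?_
  rw [mul_left_comm, Gamma_div_mul_betaIntegral_add_nat ha hc]
  ring
end

section
/- For complex a, b, z with b not a nonpositive integer, the function f(z) = Φ(a, b, z) satisfies the Kummer differential equation z f''(z) + (b − z) f'(z) − a f(z) = 0. -/
/-!
Write `Φ(a, b, z) = ∑ cₙ zⁿ` with `cₙ = (a)ₙ / ((b)ₙ n!)`. Then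
`cₙ₊₁ = (a + n) / ((b + n)(n + 1)) · cₙ`; this ratio tends to `0`, so the series converges
absolutely on all of `ℂ` and may be differentiated termwise. Substituting the derivative series
into `z f'' + (b - z) f' - a f`, the coefficient of `zⁿ` is
`(b + n)(n + 1)cₙ₊₁ - (a + n)cₙ`, which vanishes as soon as `b + n ≠ 0`.
-/

open Complex

open Filter Topology

theorem summable_norm_mul_pow_of_norm_succ_le {E : Type*} [SeminormedAddCommGroup E]
    {c : ℕ → E} {q : ℕ → ℝ} (hq : Tendsto q atTop (𝓝 0))
    (hc : ∀ n, ‖c (n + 1)‖ ≤ q n * ‖c n‖) (r : ℝ) :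
    Summable fun n => ‖c n‖ * r ^ n := by
  have hsmall : ∀ᶠ n in atTop, q n * |r| ≤ 1 / 2 := by
    have hqr : Tendsto (fun n => q n * |r|) atTop (𝓝 0) := by
      simpa using hq.mul_const |r|
    exact hqr.eventually (ge_mem_nhds (by norm_num))
  refine summable_of_ratio_norm_eventually_le (r := 1 / 2) (by norm_num) ?_
  filter_upwards [hsmall] with n hn
  calc ‖‖c (n + 1)‖ * r ^ (n + 1)‖ = ‖c (n + 1)‖ * (|r| * |r| ^ n) := by
        rw [norm_mul, norm_norm, norm_pow, Real.norm_eq_abs, pow_succ, mul_comm (|r| ^ n)]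
    _ ≤ q n * ‖c n‖ * (|r| * |r| ^ n) := by gcongr; exact hc n
    _ = q n * |r| * ‖‖c n‖ * r ^ n‖ := by
        rw [norm_mul, norm_norm, norm_pow, Real.norm_eq_abs]; ring
    _ ≤ 1 / 2 * ‖‖c n‖ * r ^ n‖ := by gcongr

section PowerSeries

variable {𝕜 : Type*} [RCLike 𝕜]

def derivCoeff (c : ℕ → 𝕜) (n : ℕ) : 𝕜 := (n + 1) * c (n + 1)

variable {c : ℕ → 𝕜}

theorem summable_mul_pow (hc : ∀ r : ℝ, Summable fun n => ‖c n‖ * r ^ n) (z : 𝕜) :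
    Summable fun n => c n * z ^ n :=
  .of_norm (by simpa only [norm_mul, norm_pow] using hc ‖z‖)

theorem summable_norm_derivCoeff_mul_pow (hc : ∀ r : ℝ, Summable fun n => ‖c n‖ * r ^ n)
    (r : ℝ) : Summable fun n => ‖derivCoeff c n‖ * r ^ n := by
  set s := max |r| 1
  have hbound (n : ℕ) : ((n : ℝ) + 1) * |r| ^ n ≤ (2 * s) ^ (n + 1) := by
    have h2 : (n : ℝ) + 1 ≤ 2 ^ (n + 1) := by exact_mod_cast (Nat.lt_two_pow_self).le
    have hs : |r| ^ n ≤ s ^ (n + 1) :=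
      (pow_le_pow_left₀ (abs_nonneg r) (le_max_left _ _) n).trans
        (pow_le_pow_right₀ (le_max_right _ _) n.le_succ)
    rw [mul_pow]
    exact mul_le_mul h2 hs (by positivity) (by positivity)
  refine .of_norm_bounded ((summable_nat_add_iff 1).mpr (hc (2 * s))) fun n => ?_
  have hn : ‖(n : 𝕜) + 1‖ = (n : ℝ) + 1 := by
    exact_mod_cast RCLike.norm_natCast (K := 𝕜) (n + 1)
  calc ‖‖derivCoeff c n‖ * r ^ n‖ = ‖c (n + 1)‖ * (((n : ℝ) + 1) * |r| ^ n) := by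
        rw [derivCoeff, norm_mul, norm_norm, norm_mul, hn, norm_pow, Real.norm_eq_abs]; ring
    _ ≤ ‖c (n + 1)‖ * (2 * s) ^ (n + 1) := by gcongr; exact hbound n

theorem hasDerivAt_tsum_mul_pow (hc : ∀ r : ℝ, Summable fun n => ‖c n‖ * r ^ n) (z : 𝕜) :
    HasDerivAt (fun w => ∑' n, c n * w ^ n) (∑' n, derivCoeff c n * z ^ n) z := by
  set R := ‖z‖ + 1
  have hR : ‖z‖ < R := lt_add_one _
  have hu : Summable fun n : ℕ => ‖(n : 𝕜) * c n‖ * R ^ (n - 1) := by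
    refine (summable_nat_add_iff 1).mp ?_
    simpa [derivCoeff] using summable_norm_derivCoeff_mul_pow hc R
  have hbound (n : ℕ) (y : 𝕜) (hy : y ∈ Metric.ball 0 R) :
      ‖c n * (n * y ^ (n - 1))‖ ≤ ‖(n : 𝕜) * c n‖ * R ^ (n - 1) := by
    rw [mem_ball_zero_iff] at hy
    rw [mul_left_comm, ← mul_assoc, norm_mul, norm_pow]
    gcongr
  have hderiv := hasDerivAt_tsum_of_isPreconnected hu Metric.isOpen_ball
    (convex_ball 0 R).isPreconnected (fun n y _ => (hasDerivAt_pow n y).const_mul (c n))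
    hbound (Metric.mem_ball_self (by positivity)) (summable_mul_pow hc 0)
    (mem_ball_zero_iff.mpr hR)
  have hshift (n : ℕ) :
      c (n + 1) * ((n + 1 : ℕ) * z ^ (n + 1 - 1)) = derivCoeff c n * z ^ n := by
    rw [derivCoeff, Nat.add_sub_cancel]; push_cast; ring
  refine hderiv.congr_deriv ?_
  rw [tsum_eq_zero_add' ?summable]
  case summable =>
    simpa only [hshift] using summable_mul_pow (summable_norm_derivCoeff_mul_pow hc) z
  simp only [hshift, CharP.cast_eq_zero, zero_mul, mul_zero, zero_add]

theorem hasSum_natCast_mul_mul_pow {z : 𝕜} (h : Summable fun n => derivCoeff c n * z ^ n) :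
    HasSum (fun n : ℕ => n * c n * z ^ n) (z * ∑' n, derivCoeff c n * z ^ n) := by
  rw [← hasSum_nat_add_iff' 1]
  simpa [derivCoeff, pow_succ, mul_comm, mul_left_comm, mul_assoc] using h.hasSum.mul_left z

theorem kummer_ode_of_derivCoeff_rec {a b : 𝕜}
    (hc : ∀ r : ℝ, Summable fun n => ‖c n‖ * r ^ n)
    (hrec : ∀ n : ℕ, (b + n) * derivCoeff c n = (a + n) * c n) (z : 𝕜) :
    z * iteratedDeriv 2 (fun w => ∑' n, c n * w ^ n) z
      + (b - z) * deriv (fun w => ∑' n, c n * w ^ n) z - a * ∑' n, c n * z ^ n = 0 := by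
  have hc' := summable_norm_derivCoeff_mul_pow hc
  have hderiv : deriv (fun w => ∑' n, c n * w ^ n) = fun w => ∑' n, derivCoeff c n * w ^ n :=
    funext fun w => (hasDerivAt_tsum_mul_pow hc w).deriv
  have hderiv2 : iteratedDeriv 2 (fun w => ∑' n, c n * w ^ n) z
      = ∑' n, derivCoeff (derivCoeff c) n * z ^ n := by
    rw [iteratedDeriv_succ, iteratedDeriv_one, hderiv]
    exact (hasDerivAt_tsum_mul_pow hc' z).deriv
  have hS0 := (summable_mul_pow hc z).hasSum
  have hS1 := (summable_mul_pow hc' z).hasSum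
  have hzS1 := hasSum_natCast_mul_mul_pow (summable_mul_pow hc' z)
  have hzS2 :=
    hasSum_natCast_mul_mul_pow (summable_mul_pow (summable_norm_derivCoeff_mul_pow hc') z)
  have hsum := ((hzS2.add (hS1.mul_left b)).sub hzS1).sub (hS0.mul_left a)
  have hterm (n : ℕ) : n * derivCoeff c n * z ^ n + b * (derivCoeff c n * z ^ n)
      - n * c n * z ^ n - a * (c n * z ^ n) = 0 := by
    linear_combination z ^ n * hrec n
  simp only [hterm] at hsum
  rw [hderiv2, hderiv]
  linear_combination hsum.unique hasSum_zero

end PowerSeries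

noncomputable def kummerCoeff (a b : ℂ) (n : ℕ) : ℂ :=
  (ascPochhammer ℂ n).eval a / (ascPochhammer ℂ n).eval b / n.factorial

theorem kummerPhi_eq_tsum (a b : ℂ) :
    kummerPhi a b = fun z => ∑' n, kummerCoeff a b n * z ^ n :=
  funext fun z => tsum_congr fun n => by rw [kummerCoeff]; ring

theorem kummerCoeff_succ (a b : ℂ) (n : ℕ) :
    kummerCoeff a b (n + 1) = (a + n) / ((b + n) * (n + 1)) * kummerCoeff a b n := by
  simp only [kummerCoeff, ascPochhammer_succ_eval, Nat.factorial_succ, Nat.cast_mul,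
    Nat.cast_succ, div_eq_mul_inv, mul_inv]
  ring

theorem tendsto_norm_kummerCoeff_ratio (a b : ℂ) :
    Tendsto (fun n : ℕ => ‖(a + n) / ((b + n) * (n + 1))‖) atTop (𝓝 0) := by
  have hden : Tendsto (fun n : ℕ => ‖b + n‖) atTop atTop := by
    refine tendsto_atTop_mono (fun n => ?_)
      (tendsto_atTop_add_const_right _ (-‖b‖) tendsto_natCast_atTop_atTop)
    simpa [sub_eq_neg_add, add_comm] using norm_sub_le (b + n) b
  refine squeeze_zero (fun n => norm_nonneg _) (fun n => ?_)
    ((tendsto_const_nhds (x := ‖a‖ + 1)).div_atTop hden)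
  have hnum : ‖a + n‖ ≤ (‖a‖ + 1) * (n + 1) := by
    have := norm_add_le a n
    rw [Complex.norm_natCast] at this
    nlinarith [norm_nonneg a]
  have hn : ‖(n : ℂ) + 1‖ = n + 1 := by exact_mod_cast Complex.norm_natCast (n + 1)
  rw [norm_div, norm_mul, hn, mul_comm, ← div_div]
  gcongr
  rwa [div_le_iff₀ (by positivity)]

theorem summable_norm_kummerCoeff_mul_pow (a b : ℂ) (r : ℝ) :
    Summable fun n => ‖kummerCoeff a b n‖ * r ^ n :=
  summable_norm_mul_pow_of_norm_succ_le (tendsto_norm_kummerCoeff_ratio a b)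
    (fun n => by rw [kummerCoeff_succ, norm_mul]) r

theorem kummerCoeff_rec {a b : ℂ} (hb : ∀ n : ℕ, b ≠ -(n : ℂ)) (n : ℕ) :
    (b + n) * derivCoeff (kummerCoeff a b) n = (a + n) * kummerCoeff a b n := by
  have hbn : b + n ≠ 0 := fun h => hb n (eq_neg_of_add_eq_zero_left h)
  rw [derivCoeff, kummerCoeff_succ]
  field_simp

theorem kummer_ode (a b : ℂ) (hb : ∀ n : ℕ, b ≠ -(n : ℂ)) (z : ℂ) :
    z * iteratedDeriv 2 (kummerPhi a b) z + (b - z) * deriv (kummerPhi a b) z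
      - a * kummerPhi a b z = 0 := by
  rw [kummerPhi_eq_tsum]
  exact kummer_ode_of_derivCoeff_rec (summable_norm_kummerCoeff_mul_pow a b)
    (kummerCoeff_rec hb) z
end

section
/- Let n ∈ ℕ*, m ∈ ℕ, τ > 0, and Δ(s) = s^n + ∑_{k=0}^{n−1} a_k s^k + e^{−sτ} ∑_{k=0}^m α_k s^k with real coefficients. If s_0 ∈ ℝ is a root of Δ of multiplicity n+m+1, then s_0 = −a_{n−1}/n − (m+1)/τ. -/
/-!
Multiplying by `e^{τs}` turns `Δ = P + e^{-τs} Q` into `e^{τs} P + Q`, whose `j`-th derivative is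
`e^{τs} ((D + τ)^j P) + Q^{(j)}`. Since `deg Q ≤ m`, the multiplicity hypothesis therefore gives
`((D + τ)^j P)(s₀) = 0` for `m < j ≤ n + m`. Writing `D = (D + τ) - τ` and expanding binomially,
this yields `(D^{n-1} (D + τ)^{m+1} P)(s₀) = 0`. The polynomial `D^{n-1} P` is affine, so `D` is
nilpotent of order two on it and the last condition is one linear equation in `s₀`, involving only
the top two coefficients `1` and `a_{n-1}` of `P`.
-/

open Polynomial Finset
open scoped Nat

theorem Module.End.add_algebraMap_pow_eq_sum {R M : Type*} [CommSemiring R] [AddCommMonoid M]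
    [Module R M] (A : Module.End R M) (t : R) (j : ℕ) :
    (A + algebraMap R _ t) ^ j = ∑ i ∈ range (j + 1), (j.choose i * t ^ (j - i)) • A ^ i := by
  have hcomm : Commute A (algebraMap R _ t) := (Algebra.commutes t A).symm
  rw [hcomm.add_pow]
  refine sum_congr rfl fun i _ => ?_
  rw [← map_pow, ← map_natCast (algebraMap R _), mul_assoc, ← map_mul, ← Algebra.commutes,
    Algebra.smul_def, mul_comm (t ^ _)]

theorem LinearMap.add_algebraMap_pow_apply_eq {R M N : Type*} [CommSemiring R] [AddCommMonoid M]
    [AddCommMonoid N] [Module R M] [Module R N] (f : M →ₗ[R] N) {A B : Module.End R M} {p q : M}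
    {k : ℕ} (h : ∀ i ≤ k, f ((A ^ i) p) = f ((B ^ i) q)) (t : R) :
    ∀ j ≤ k, f (((A + algebraMap R _ t) ^ j) p) = f (((B + algebraMap R _ t) ^ j) q) := by
  intro j hj
  simp only [Module.End.add_algebraMap_pow_eq_sum, LinearMap.sum_apply, map_sum,
    LinearMap.smul_apply, map_smul]
  exact sum_congr rfl fun i hi => by rw [h i (by grind)]

namespace Polynomial

theorem iteratedDeriv_eval_add_cexp_mul_eval (P Q : ℂ[X]) (c : ℂ) (j : ℕ) :
    iteratedDeriv j (fun s => P.eval s + Complex.exp (c * s) * Q.eval s) =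
      fun s => ((derivative ^ j) P).eval s +
        Complex.exp (c * s) * (((derivative + algebraMap ℂ _ c) ^ j) Q).eval s := by
  induction j with
  | zero => simp
  | succ j ih =>
    ext s
    set Pj := (derivative ^ j) P
    set Qj := ((derivative + algebraMap ℂ _ c) ^ j) Q
    have hderiv : HasDerivAt (fun s => Pj.eval s + Complex.exp (c * s) * Qj.eval s)
        ((derivative Pj).eval s + (Complex.exp (c * s) * (c * 1) * Qj.eval s +
          Complex.exp (c * s) * (derivative Qj).eval s)) s :=
      (Polynomial.hasDerivAt Pj s).add
        (((hasDerivAt_id' s).const_mul c).cexp.mul (Polynomial.hasDerivAt Qj s))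
    rw [iteratedDeriv_succ, ih, pow_succ', pow_succ', Module.End.mul_apply, Module.End.mul_apply,
      hderiv.deriv]
    simp only [LinearMap.add_apply, Module.algebraMap_end_apply, eval_add, eval_smul, smul_eq_mul]
    ring

theorem eval_add_algebraMap_pow_eq_zero_of_iteratedDeriv_eq_zero {P Q : ℂ[X]} {c s₀ : ℂ}
    {m N : ℕ} (hQ : Q.natDegree ≤ m)
    (h : ∀ j ≤ N, iteratedDeriv j (fun s => P.eval s + Complex.exp (-c * s) * Q.eval s) s₀ = 0)
    {j : ℕ} (hmj : m < j) (hjN : j ≤ N) :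
    (((derivative + algebraMap ℂ _ c) ^ j) P).eval s₀ = 0 := by
  have hexp : ∀ i ≤ N, leval s₀ ((derivative ^ i) P) =
      leval s₀ (((derivative + algebraMap ℂ _ (-c)) ^ i) (-Complex.exp (-c * s₀) • Q)) := by
    intro i hi
    have hi := h i hi
    rw [iteratedDeriv_eval_add_cexp_mul_eval] at hi
    simp only [leval_apply, map_smul, smul_eq_mul]
    linear_combination hi
  rw [← leval_apply, LinearMap.add_algebraMap_pow_apply_eq _ hexp c j hjN, add_assoc, ← map_add,
    neg_add_cancel, map_zero, add_zero, map_smul, Module.End.pow_apply,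
    iterate_derivative_eq_zero (hQ.trans_lt hmj), smul_zero, map_zero]

theorem add_algebraMap_pow_succ_apply_of_derivative_derivative_eq_zero {R : Type*}
    [CommSemiring R] {L : R[X]} (hL : derivative (derivative L) = 0) (t : R) (m : ℕ) :
    ((derivative + algebraMap R _ t) ^ (m + 1)) L =
      t ^ (m + 1) • L + ((m + 1) * t ^ m) • derivative L := by
  induction m with
  | zero => simp [add_comm]
  | succ m ih =>
    rw [pow_succ', Module.End.mul_apply, ih]
    simp only [LinearMap.add_apply, Module.algebraMap_end_apply, map_add, map_smul, hL,
      smul_zero, smul_add, smul_smul]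
    push_cast
    module

theorem iterate_derivative_eq_of_natDegree_le_succ {R : Type*} [CommSemiring R] {P : R[X]}
    {n : ℕ} (hP : P.natDegree ≤ n + 1) :
    derivative^[n] P = C (n ! * P.coeff n) + C ((n + 1)! * P.coeff (n + 1)) * X := by
  ext k
  rw [coeff_iterate_derivative]
  rcases k with _ | _ | k
  · simp [Nat.descFactorial_self]
  · have h := Nat.descFactorial_succ (n + 1) n
    rw [Nat.descFactorial_self, Nat.add_sub_cancel_left, one_mul] at h
    simp [add_comm 1 n, ← h]
  · rw [coeff_eq_zero_of_natDegree_lt (by omega)]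
    simp

theorem eval_add_algebraMap_pow_succ_iterate_derivative {R : Type*} [CommSemiring R] {P : R[X]}
    {n : ℕ} (hP : P.natDegree ≤ n + 1) (t s : R) (m : ℕ) :
    (((derivative + algebraMap R _ t) ^ (m + 1)) (derivative^[n] P)).eval s =
      t ^ (m + 1) * (n ! * P.coeff n + (n + 1)! * P.coeff (n + 1) * s) +
        (m + 1) * t ^ m * ((n + 1)! * P.coeff (n + 1)) := by
  rw [iterate_derivative_eq_of_natDegree_le_succ hP,
    add_algebraMap_pow_succ_apply_of_derivative_derivative_eq_zero (by simp)]
  simp [mul_add]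

theorem eval_derivative_pow_add_algebraMap_pow_eq_zero {R : Type*} [CommRing R] {P : R[X]}
    {t s : R} {m n : ℕ}
    (h : ∀ j, m < j → j ≤ n + 1 + m → (((derivative + algebraMap R _ t) ^ j) P).eval s = 0) :
    (((derivative + algebraMap R _ t) ^ (m + 1)) (derivative^[n] P)).eval s = 0 := by
  set S := ((derivative + algebraMap R _ t) ^ (m + 1)) P
  have hR : ∀ i ≤ n, leval s (((derivative + algebraMap R _ t) ^ i) S) =
      leval s ((derivative ^ i) 0) := by
    intro i hi
    rw [map_zero, map_zero, ← Module.End.mul_apply, ← pow_add]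
    exact h _ (by omega) (by omega)
  have hRn := LinearMap.add_algebraMap_pow_apply_eq _ hR (-t) n le_rfl
  rw [map_neg, add_neg_cancel_right, map_zero, map_zero] at hRn
  have hcomm : Commute (derivative : Module.End R R[X]) (derivative + algebraMap R _ t) :=
    (Commute.refl _).add_right (Algebra.commutes _ _).symm
  rwa [← Module.End.mul_apply, (hcomm.pow_pow n (m + 1)).eq, Module.End.mul_apply,
    Module.End.pow_apply derivative] at hRn

end Polynomial

open Complex

theorem max_multiplicity_s0_relation (n : ℕ) (hn : 0 < n) (m : ℕ) (τ : ℝ) (hτ : 0 < τ)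
    (a α : ℕ → ℝ) (s₀ : ℝ)
    (Δ : ℂ → ℂ)
    (hΔ : ∀ s : ℂ, Δ s = s ^ n + (∑ k ∈ Finset.range n, (a k : ℂ) * s ^ k) +
      Complex.exp (-s * τ) * ∑ k ∈ Finset.range (m + 1), (α k : ℂ) * s ^ k)
    (hmult : ∀ j ≤ n + m, iteratedDeriv j Δ (s₀ : ℂ) = 0) :
    s₀ = -a (n - 1) / n - (m + 1) / τ := by
  obtain ⟨n, rfl⟩ : ∃ k, n = k + 1 := ⟨n - 1, by omega⟩
  set P : ℂ[X] := X ^ (n + 1) + ∑ k ∈ range (n + 1), C (a k : ℂ) * X ^ k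
  set Q : ℂ[X] := ∑ k ∈ range (m + 1), C (α k : ℂ) * X ^ k
  have hΔ' : Δ = fun s => P.eval s + exp (-τ * s) * Q.eval s := by
    ext s
    simp only [hΔ, P, Q, eval_add, eval_pow, eval_X, eval_finsetSum, eval_mul, eval_C, neg_mul,
      mul_comm (τ : ℂ)]
  have hQ : Q.natDegree ≤ m :=
    natDegree_sum_le_of_forall_le _ _ fun k hk =>
      (natDegree_C_mul_X_pow_le _ _).trans (Nat.le_of_lt_succ (mem_range.mp hk))
  have hP : P.natDegree ≤ n + 1 :=
    (natDegree_add_le _ _).trans <| max_le (natDegree_X_pow_le _) <|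
      natDegree_sum_le_of_forall_le _ _ fun k hk =>
        (natDegree_C_mul_X_pow_le _ _).trans (mem_range.mp hk).le
  have hPn : P.coeff n = a n := by simp [P, coeff_X_pow, coeff_C_mul]
  have hPn1 : P.coeff (n + 1) = 1 := by simp [P, coeff_X_pow, coeff_C_mul]
  have heval := eval_derivative_pow_add_algebraMap_pow_eq_zero (n := n) fun j hmj hjN =>
    eval_add_algebraMap_pow_eq_zero_of_iteratedDeriv_eq_zero hQ (hΔ' ▸ hmult) hmj hjN
  rw [eval_add_algebraMap_pow_succ_iterate_derivative hP, hPn, hPn1, mul_one] at heval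
  have hevalR : τ ^ (m + 1) * (n ! * a n + (n + 1)! * s₀) + (m + 1) * τ ^ m * (n + 1)! = 0 := by
    exact_mod_cast heval
  rw [Nat.factorial_succ] at hevalR
  push_cast at hevalR ⊢
  field_simp
  refine mul_left_cancel₀ (by positivity : (n ! * τ ^ m : ℝ) ≠ 0) ?_
  linear_combination hevalR
end

section
/- For l > −1/2 and k = l + 3/2, the Kummer function Φ(1/2 + l − k, 1 + 2l, ·) = Φ(−1, 1 + 2l, ·) has exactly one root, namely z = 1 + 2l; consequently, for l > 0 and k = l + 3/2 > 0, the unique nontrivial zero z of the Whittaker function M_{k,l} satisfies Re(z) = 1 + 2l < 2k, disproving the claim that all nontrivial zeros z of M_{k,l} with k > 0 satisfy Re(z) > 2k. -/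
open Complex

/-- The Whittaker function `M_{k,l}`. -/
noncomputable def whittakerM (k l z : ℂ) : ℂ :=
  Complex.exp (-z / 2) * z ^ ((1 : ℂ) / 2 + l) * kummerPhi (1 / 2 + l - k) (1 + 2 * l) z

/- For `a = -n` the Pochhammer symbol `(a)_k` vanishes once `k > n`, so the series terminates. -/
theorem kummerPhi_neg_natCast (n : ℕ) (b z : ℂ) :
    kummerPhi (-n) b z = ∑ k ∈ Finset.range (n + 1),
      ((ascPochhammer ℂ k).eval (-n : ℂ) / (ascPochhammer ℂ k).eval b) * z ^ k /
        (Nat.factorial k) := by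
  refine tsum_eq_sum fun k hk => ?_
  rw [ascPochhammer_eval_neg_coe_nat_of_lt (by simpa [Nat.lt_succ_iff] using hk)]
  simp

theorem kummerPhi_neg_one (b z : ℂ) : kummerPhi (-1) b z = 1 - z / b := by
  have h := kummerPhi_neg_natCast 1 b z
  rw [Nat.cast_one] at h
  rw [h]
  simp [Finset.sum_range_succ]
  ring

theorem kummerPhi_neg_one_eq_zero_iff {b : ℂ} (hb : b ≠ 0) (z : ℂ) :
    kummerPhi (-1) b z = 0 ↔ z = b := by
  rw [kummerPhi_neg_one, sub_eq_zero, eq_comm, div_eq_one_iff_eq hb]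

theorem whittakerM_eq_zero_iff {k l z : ℂ} (hz : z ≠ 0) :
    whittakerM k l z = 0 ↔ kummerPhi (1 / 2 + l - k) (1 + 2 * l) z = 0 := by
  simp [whittakerM, Complex.exp_ne_zero, hz]

theorem saff_varga_counterexample (l : ℝ) (hl : -1 / 2 < l) :
    (∀ z : ℂ, kummerPhi (-1) (1 + 2 * l) z = 0 ↔ z = 1 + 2 * l) ∧
      (0 < l → ∀ z : ℂ, z ≠ 0 → whittakerM (l + 3 / 2) l z = 0 →
        z.re = 1 + 2 * l ∧ z.re < 2 * (l + 3 / 2)) := by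
  have hb : (1 + 2 * l : ℂ) ≠ 0 := by
    exact_mod_cast (show (1 + 2 * l : ℝ) ≠ 0 by linarith)
  have hroot := kummerPhi_neg_one_eq_zero_iff hb
  refine ⟨hroot, fun _ z hz hw => ?_⟩
  have ha : (1 / 2 + l - (l + 3 / 2) : ℂ) = -1 := by ring
  rw [whittakerM_eq_zero_iff hz, ha, hroot] at hw
  subst hw
  constructor
  · simp
  · simp
    linarith
end
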